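/- arXiv:0810.3381 — 2 statements merged into one kernel-verified Lean document; each statement's English description precedes it below -/
import Mathlib

section
/- Let d ≥ 1 and let (u_i)_{i=1}^{d²} be a SIC system on ℂ^d. Then the d² vectors u_i ⊗ ū_i in ℂ^d ⊗ ℂ^d are linearly independent (hence form a basis of ℂ^d ⊗ ℂ^d). -/
open scoped BigOperators ComplexInnerProductSpace
open Matrix MeasureTheory

noncomputable section

/-- `ℂ^d` with the standard Hermitian inner product. -/
abbrev V (d : ℕ) : Type := EuclideanSpace ℂ (Fin d)

/-- `ℂ^d ⊗ ℂ^d`, identified with functions on `Fin d × Fin d`. -/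
abbrev V2 (d : ℕ) : Type := EuclideanSpace ℂ (Fin d × Fin d)

/-- operators on `ℂ^d ⊗ ℂ^d`, as matrices. -/
abbrev Op2 (d : ℕ) : Type := Matrix (Fin d × Fin d) (Fin d × Fin d) ℂ

/-- tensor (Kronecker) product of vectors. -/
def tens {d : ℕ} (u v : V d) : V2 d := WithLp.toLp 2 (fun p : Fin d × Fin d => u p.1 * v p.2)

/-- entrywise complex conjugate `ū` of a vector. -/
def cvec {d : ℕ} (u : V d) : V d := WithLp.toLp 2 (fun k => starRingEnd ℂ (u k))

/-- the maximally entangled state `φ⁰ = (1/√d) Σ_k e_k ⊗ e_k`. -/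
def phi0 (d : ℕ) : V2 d := WithLp.toLp 2 (fun p : Fin d × Fin d => if p.1 = p.2 then ((Real.sqrt d : ℂ))⁻¹ else 0)

/-- the rank-one operator `|w⟩⟨w|`. -/
def outer {d : ℕ} (w : V2 d) : Op2 d := Matrix.of fun p q => w p * starRingEnd ℂ (w q)

/-- `T_inv = |φ⁰⟩⟨φ⁰| + (1/(d+1))(I - |φ⁰⟩⟨φ⁰|)`. -/
def Tinv (d : ℕ) : Op2 d := outer (phi0 d) + (1 / ((d : ℂ) + 1)) • (1 - outer (phi0 d))


/-- A SIC system on `ℂ^d`: `d²` unit vectors with `|⟨u_i, u_j⟩|² = 1/(d+1)` for `i ≠ j`. -/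
def IsSIC {d : ℕ} (u : Fin (d ^ 2) → V d) : Prop :=
  (∀ i, ‖u i‖ = 1) ∧ ∀ i j, i ≠ j → ‖⟪u i, u j⟫‖ ^ 2 = 1 / (d + 1)

/-! Since `⟪a ⊗ ā, b ⊗ b̄⟫ = |⟪a, b⟫|²`, the Gram matrix of the vectors `u_i ⊗ ū_i` is
`(1 - t) I + t J` with `t = 1/(d+1)` and `J` the all-ones matrix. For `0 ≤ t < 1` this matrix is
nonsingular: if `∑ c_i w_i = 0`, pairing with `w_j` gives `(1 - t) c_j + t ∑ c_i = 0` for every `j`,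
summing over `j` forces `∑ c_i = 0`, and then every `c_j = 0`. -/
lemma inner_tens {d : ℕ} (a b c e : V d) : ⟪tens a b, tens c e⟫ = ⟪a, c⟫ * ⟪b, e⟫ := by
  simp only [PiLp.inner_apply, RCLike.inner_apply, tens, Fintype.sum_prod_type,
    Finset.sum_mul_sum, map_mul]
  exact Finset.sum_congr rfl fun _ _ => Finset.sum_congr rfl fun _ _ => by ring

lemma inner_cvec {d : ℕ} (a b : V d) : ⟪cvec a, cvec b⟫ = ⟪b, a⟫ := by
  simp only [PiLp.inner_apply, RCLike.inner_apply, cvec, Complex.conj_conj]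
  exact Finset.sum_congr rfl fun _ _ => mul_comm _ _

lemma inner_tens_cvec {d : ℕ} (a b : V d) :
    ⟪tens a (cvec a), tens b (cvec b)⟫ = ((‖⟪a, b⟫‖ ^ 2 : ℝ) : ℂ) := by
  rw [inner_tens, inner_cvec, ← inner_conj_symm b a, Complex.mul_conj, Complex.normSq_eq_norm_sq]

lemma norm_tens_cvec {d : ℕ} (a : V d) : ‖tens a (cvec a)‖ = ‖a‖ ^ 2 := by
  have h := inner_tens_cvec a a
  rw [inner_self_eq_norm_sq_to_K, inner_self_eq_norm_sq_to_K] at h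
  norm_cast at h
  rw [abs_of_nonneg (by positivity)] at h
  exact (pow_left_inj₀ (norm_nonneg _) (by positivity) two_ne_zero).mp (Complex.ofReal_injective h)

open Finset in
lemma linearIndependent_of_norm_eq_one_of_inner_eq {𝕜 E ι : Type*} [RCLike 𝕜] [NormedAddCommGroup E]
    [InnerProductSpace 𝕜 E] [Fintype ι] {w : ι → E} {t : ℝ} (ht₀ : 0 ≤ t) (ht₁ : t < 1)
    (hnorm : ∀ i, ‖w i‖ = 1) (hinner : ∀ i j, i ≠ j → inner 𝕜 (w i) (w j) = t) :
    LinearIndependent 𝕜 w := by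
  classical
  rw [Fintype.linearIndependent_iff]
  intro c hc
  have hrow : ∀ j, ((1 - t : ℝ) : 𝕜) * c j + t * ∑ i, c i = 0 := by
    intro j
    have h := congrArg (inner 𝕜 (w j)) hc
    rw [inner_sum, inner_zero_right, ← add_sum_erase _ _ (mem_univ j), inner_smul_right,
      inner_self_eq_norm_sq_to_K, hnorm, sum_congr rfl fun i hi => by
        rw [inner_smul_right, hinner j i (ne_of_mem_erase hi).symm], ← sum_mul] at h
    rw [← add_sum_erase _ _ (mem_univ j)]
    push_cast at h ⊢
    linear_combination h
  have hS : ∑ i, c i = 0 := by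
    have h : ∑ j, (((1 - t : ℝ) : 𝕜) * c j + t * ∑ i, c i) = 0 := sum_eq_zero fun j _ => hrow j
    rw [sum_add_distrib, ← mul_sum, sum_const, card_univ, nsmul_eq_mul] at h
    have hpos : (0 : ℝ) < 1 - t + Fintype.card ι * t := by nlinarith
    have h' : ((1 - t + Fintype.card ι * t : ℝ) : 𝕜) * ∑ i, c i = 0 := by
      push_cast at h ⊢
      linear_combination h
    exact (mul_eq_zero.mp h').resolve_left (by exact_mod_cast hpos.ne')
  intro j
  have h := hrow j
  rw [hS, mul_zero, add_zero] at h
  exact (mul_eq_zero.mp h).resolve_left (by exact_mod_cast (sub_pos.mpr ht₁).ne')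

/-- For a SIC system, the vectors `u_i ⊗ ū_i` are linearly independent
(hence, being `d²` of them, form a basis of `ℂ^d ⊗ ℂ^d`). -/
theorem stmt1 (d : ℕ) (hd : 1 ≤ d) (u : Fin (d ^ 2) → V d) (hu : IsSIC u) :
    LinearIndependent ℂ (fun i => tens (u i) (cvec (u i))) := by
  have hd' : (0 : ℝ) < d := by exact_mod_cast hd
  refine linearIndependent_of_norm_eq_one_of_inner_eq (t := 1 / (d + 1)) (by positivity)
    ((div_lt_one (by positivity)).mpr (by linarith)) (fun i => ?_) (fun i j hij => ?_)
  · rw [norm_tens_cvec, hu.1 i, one_pow]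
  · rw [inner_tens_cvec]
    exact congrArg _ (hu.2 i j hij)
end
end

section
/- Let d ≥ 1, let I be a finite index set, and for each i ∈ I let p_i > 0 be a real number and u_i ∈ ℂ^d a unit vector. If Σ_{i∈I} p_i·|u_i ⊗ ū_i⟩⟨u_i ⊗ ū_i| = T_inv, then the cardinality of I is at least d². -/
open scoped BigOperators ComplexInnerProductSpace
open Matrix MeasureTheory

noncomputable section

/-!
`|φ⁰⟩⟨φ⁰|` is an idempotent, and `T_inv` acts as `1` on its range and as `1/(d+1)` on its
kernel, so `T_inv` is invertible and has rank `d²`. On the other hand a sum of `|I|` rank-one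
operators `p_i |w_i⟩⟨w_i|` factors through `ℂ^I`, so its rank is at most `|I|`.
-/

theorem Matrix.sum_smul_vecMulVec_eq_mul {ι m n R : Type*} [Fintype ι] [CommSemiring R]
    (c : ι → R) (w : ι → m → R) (v : ι → n → R) :
    ∑ i, c i • vecMulVec (w i) (v i) = (Matrix.of fun r i => c i * w i r) * Matrix.of v := by
  ext r q
  simp [mul_apply, vecMulVec_apply, Matrix.sum_apply, mul_assoc]

theorem Matrix.rank_sum_smul_vecMulVec_le {ι m n R : Type*} [Fintype ι] [Fintype n]
    [CommRing R] [StrongRankCondition R] (c : ι → R) (w : ι → m → R) (v : ι → n → R) :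
    (∑ i, c i • vecMulVec (w i) (v i)).rank ≤ Fintype.card ι := by
  rw [sum_smul_vecMulVec_eq_mul]
  exact (rank_mul_le_left _ _).trans (rank_le_card_width _)

theorem IsIdempotentElem.add_smul_one_sub_mul {K A : Type*} [CommRing K] [Ring A] [Algebra K A]
    {P : A} (hP : IsIdempotentElem P) (a b : K) :
    (P + a • (1 - P)) * (P + b • (1 - P)) = P + (a * b) • (1 - P) := by
  simp only [add_mul, mul_add, smul_mul_assoc, mul_smul_comm, smul_smul, mul_comm b, hP.eq,
    hP.mul_one_sub_self, hP.one_sub_mul_self, hP.one_sub.eq, smul_zero, add_zero, zero_add]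

theorem IsIdempotentElem.isUnit_add_smul_one_sub {K A : Type*} [Field K] [Ring A] [Algebra K A]
    {P : A} (hP : IsIdempotentElem P) {c : K} (hc : c ≠ 0) :
    IsUnit (P + c • (1 - P)) :=
  ⟨⟨_, P + c⁻¹ • (1 - P),
    by rw [hP.add_smul_one_sub_mul, mul_inv_cancel₀ hc, one_smul, add_sub_cancel],
    by rw [hP.add_smul_one_sub_mul, inv_mul_cancel₀ hc, one_smul, add_sub_cancel]⟩, rfl⟩

theorem outer_eq_vecMulVec {d : ℕ} (w : V2 d) : outer w = vecMulVec w (star w) := rfl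

theorem star_dotProduct_phi0 {d : ℕ} (hd : 0 < d) :
    star (phi0 d : Fin d × Fin d → ℂ) ⬝ᵥ phi0 d = 1 := by
  have hd' : (d : ℂ) ≠ 0 := by exact_mod_cast hd.ne'
  simp only [dotProduct, phi0, Pi.star_apply, RCLike.star_def, mul_ite, mul_zero,
    Fintype.sum_prod_type, Finset.sum_ite_eq, Finset.mem_univ, ↓reduceIte, map_inv₀,
    Complex.conj_ofReal, Finset.sum_const, Finset.card_univ, Fintype.card_fin, nsmul_eq_mul]
  rw [← mul_inv, ← Complex.ofReal_mul, Real.mul_self_sqrt d.cast_nonneg, Complex.ofReal_natCast,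
    mul_inv_cancel₀ hd']

theorem isIdempotentElem_outer_phi0 {d : ℕ} (hd : 0 < d) : IsIdempotentElem (outer (phi0 d)) := by
  rw [IsIdempotentElem, outer_eq_vecMulVec, vecMulVec_mul_vecMulVec, star_dotProduct_phi0 hd,
    one_smul]

theorem isUnit_Tinv {d : ℕ} (hd : 0 < d) : IsUnit (Tinv d) :=
  (isIdempotentElem_outer_phi0 hd).isUnit_add_smul_one_sub
    (one_div_ne_zero (Nat.cast_add_one_ne_zero d))

theorem stmt4_general (d : ℕ) (hd : 1 ≤ d) (ι : Type) [Fintype ι]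
    (p : ι → ℝ) (u : ι → V d)
    (h : ∑ i, (p i : ℂ) • outer (tens (u i) (cvec (u i))) = Tinv d) :
    d ^ 2 ≤ Fintype.card ι := by
  calc d ^ 2 = (Tinv d).rank := by
        rw [rank_of_isUnit _ (isUnit_Tinv hd)]; simp [sq]
    _ ≤ Fintype.card ι := by
        rw [← h]
        exact rank_sum_smul_vecMulVec_le _ _ _

/-- Any family of weighted rank-one operators `p_i |u_i ⊗ ū_i⟩⟨u_i ⊗ ū_i|`
summing to `T_inv` has at least `d²` members. -/
theorem stmt4 (d : ℕ) (hd : 1 ≤ d) (ι : Type) [Fintype ι]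
    (p : ι → ℝ) (hp : ∀ i, 0 < p i) (u : ι → V d) (hu : ∀ i, ‖u i‖ = 1)
    (h : ∑ i, (p i : ℂ) • outer (tens (u i) (cvec (u i))) = Tinv d) :
    d ^ 2 ≤ Fintype.card ι :=
  stmt4_general d hd ι p u h
end
end
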